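/- arXiv:1511.06199 — 3 statements merged into one kernel-verified Lean document; each statement's English description precedes it below -/
import Mathlib

section
/- Let N ∈ ℕ, let K : Fin N → Fin N → ℂ be a symmetric kernel (K j k = K k j for all j, k), and let z, w : Fin N → ℂ. Then for every finite subset α of Fin N, the symmetric-scheme Gaudin determinant satisfies ρ(z + w, α) = ∑_{β ⊆ α} ρ(z, β) · ρ(w, α \ β), where the sum runs over all subsets β of α. (This is the identity ρ^s_{l₁+l₂}({u}_N) = ∑_{α ∪ ᾱ = {u}_N} ρ^s_{l₁}(α) ρ^s_{l₂}(ᾱ) used in the paper, with z_j = l₁ p'(u_j) and w_j = l₂ p'(u_j).) -/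
/-!
The Gaudin matrix is `diag z + L`, where the off-diagonal part `L` has zero row sums. Adding `c`
to `z a` changes the determinant by `c` times the principal minor at `a`, and that minor is the
Gaudin matrix of `α \ {a}` with `z` shifted by `K · a`. Hence both sides of the identity are
affine in each `z a` with slopes that agree by induction on `α`, so their difference does not
depend on `z` on `α`. Taking `z = 0` on `α` finishes the proof: the vector of ones then lies in
the kernel of the Gaudin matrix of `z` on every nonempty `β ⊆ α`, so only the term `β = ∅`
survives.
-/

open Finset

/-- The symmetric-scheme Gaudin determinant: the determinant of the square matrix
indexed by `α` whose `(j,j)` entry is `z j + ∑_{l ∈ α, l ≠ j} K j l` and whose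
`(j,k)` entry for `j ≠ k` is `-(K j k)`. By convention it equals `1` on `α = ∅`. -/
noncomputable def gaudin {N : ℕ} (K : Fin N → Fin N → ℂ) (z : Fin N → ℂ)
    (α : Finset (Fin N)) : ℂ :=
  Matrix.det (Matrix.of fun j k : α =>
    if j = k then z j + ∑ l ∈ α.erase (j : Fin N), K j l else -K (j : Fin N) (k : Fin N))

theorem Finset.apply_eq_apply_piecewise_zero {ι M β : Type*} [DecidableEq ι] [AddGroup M]
    (s : Finset ι) {f : (ι → M) → β}
    (hf : ∀ z, ∀ i ∈ s, ∀ c, f (z + Pi.single i c) = f z) (z : ι → M) :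
    f z = f (s.piecewise 0 z) := by
  induction s using Finset.induction_on generalizing z with
  | empty => simp
  | insert a t ha ih =>
    have hz : Function.update z a 0 + Pi.single a (z a) = z := by
      ext j
      by_cases hj : j = a <;> simp [hj]
    calc f z = f (Function.update z a 0 + Pi.single a (z a)) := by rw [hz]
      _ = f (Function.update z a 0) := hf _ a (mem_insert_self a t) _
      _ = f (t.piecewise 0 (Function.update z a 0)) :=
          ih (fun y i hi => hf y i (mem_insert_of_mem hi)) _
      _ = f ((insert a t).piecewise 0 z) := by
          rw [piecewise_insert, update_piecewise_of_notMem (hi := ha)]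
          rfl

namespace Matrix

variable {n R : Type*} [Fintype n] [DecidableEq n] [CommRing R]

theorem det_updateRow_single_self (A : Matrix n n R) (i : n) :
    (A.updateRow i (Pi.single i 1)).det = (A.submatrix ((↑) : {j // j ≠ i} → n) (↑)).det := by
  have hunit : toSquareBlockProp (A.updateRow i (Pi.single i 1)) (fun j => ¬j ≠ i) = 1 := by
    ext ⟨j, hj⟩ ⟨k, hk⟩
    rw [not_not] at hj hk
    subst hj hk
    simp [toSquareBlockProp_def]
  rw [twoBlockTriangular_det _ (· ≠ i), hunit, det_one, mul_one, toSquareBlockProp_def]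
  · congr 1
    ext j k
    simp [updateRow_ne j.2]
  · rintro k hk j hj
    rw [not_not.1 hk, updateRow_self, Pi.single_eq_of_ne hj]

theorem det_add_diagonal_single (A : Matrix n n R) (i : n) (c : R) :
    (A + diagonal (Pi.single i c)).det
      = A.det + c * (A.submatrix ((↑) : {j // j ≠ i} → n) (↑)).det := by
  have hrow : A + diagonal (Pi.single i c) = A.updateRow i (A i + c • Pi.single i 1) := by
    ext j k
    by_cases hj : j = i
    · subst hj; rcases eq_or_ne j k with rfl | hk <;> simp [*]
    · simp [hj, diagonal_apply]
  rw [hrow, det_updateRow_add, det_updateRow_smul, updateRow_eq_self, det_updateRow_single_self]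

end Matrix

def Finset.eraseEquivSubtypeNe {ι : Type*} [DecidableEq ι] {s : Finset ι} {a : ι}
    (ha : a ∈ s) : s.erase a ≃ {j : s // j ≠ ⟨a, ha⟩} where
  toFun j := ⟨⟨j, mem_of_mem_erase j.2⟩, fun h => ne_of_mem_erase j.2 (congrArg Subtype.val h)⟩
  invFun j := ⟨j.1, mem_erase.2 ⟨fun h => j.2 (Subtype.ext h), j.1.2⟩⟩

section Gaudin

open Matrix

variable {N : ℕ} (K : Fin N → Fin N → ℂ)

noncomputable def gaudinMatrix (z : Fin N → ℂ) (α : Finset (Fin N)) : Matrix α α ℂ :=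
  of fun j k => if j = k then z j + ∑ l ∈ α.erase j, K j l else -K j k

theorem gaudin_eq_det (z : Fin N → ℂ) (α : Finset (Fin N)) :
    gaudin K z α = (gaudinMatrix K z α).det := rfl

theorem gaudin_empty (z : Fin N → ℂ) : gaudin K z ∅ = 1 :=
  det_isEmpty

theorem gaudin_congr {z z' : Fin N → ℂ} {α : Finset (Fin N)} (h : ∀ j ∈ α, z j = z' j) :
    gaudin K z α = gaudin K z' α := by
  simp only [gaudin_eq_det, gaudinMatrix, h _ (coe_mem _)]

theorem gaudinMatrix_mulVec_one (z : Fin N → ℂ) (α : Finset (Fin N)) :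
    gaudinMatrix K z α *ᵥ 1 = fun j : α => z j := by
  ext j
  have hrow : ∀ k : α, gaudinMatrix K z α j k
      = (if j = k then z j + ∑ l ∈ α, K j l else 0) - K j k := by
    intro k
    rw [← add_sum_erase α _ j.2]
    split_ifs with h
    · subst h
      simp only [gaudinMatrix, of_apply, if_true]
      ring
    · simp [gaudinMatrix, h]
  simp only [mulVec, dotProduct, Pi.one_apply, mul_one, hrow, sum_sub_distrib,
    sum_ite_eq, mem_univ, if_true, sum_coe_sort α (K j)]
  ring

theorem gaudin_eq_zero_of_forall_eq_zero {z : Fin N → ℂ} {α : Finset (Fin N)} (hα : α.Nonempty)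
    (hz : ∀ j ∈ α, z j = 0) : gaudin K z α = 0 := by
  rw [gaudin_eq_det, ← exists_mulVec_eq_zero_iff]
  obtain ⟨a, ha⟩ := hα
  refine ⟨1, fun h => one_ne_zero (congrFun h ⟨a, ha⟩), ?_⟩
  rw [gaudinMatrix_mulVec_one]
  ext j
  exact hz j j.2

theorem gaudinMatrix_add_single {α : Finset (Fin N)} {a : Fin N} (ha : a ∈ α) (z : Fin N → ℂ)
    (c : ℂ) : gaudinMatrix K (z + Pi.single a c) α
      = gaudinMatrix K z α + diagonal (Pi.single ⟨a, ha⟩ c) := by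
  ext j k
  rcases eq_or_ne j k with rfl | hjk
  · simp only [gaudinMatrix, of_apply, if_true, Pi.add_apply, Matrix.add_apply, diagonal_apply_eq,
      Pi.single_apply, Subtype.ext_iff]
    ring
  · simp [gaudinMatrix, hjk]

theorem det_gaudinMatrix_submatrix_ne {α : Finset (Fin N)} {a : Fin N} (ha : a ∈ α)
    (z : Fin N → ℂ) :
    ((gaudinMatrix K z α).submatrix ((↑) : {j // j ≠ (⟨a, ha⟩ : α)} → α) (↑)).det
      = gaudin K (fun j => z j + K j a) (α.erase a) := by
  rw [← det_submatrix_equiv_self (eraseEquivSubtypeNe ha), gaudin_eq_det]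
  congr 1
  ext j k
  rcases eq_or_ne j k with rfl | hjk
  · simp only [gaudinMatrix, eraseEquivSubtypeNe, Equiv.coe_fn_mk, submatrix_apply, of_apply,
      if_true, sum_erase_eq_sub (coe_mem _)]
    rw [← add_sum_erase α _ ha]
    ring
  · have hjk' : (j : Fin N) ≠ k := fun h => hjk (Subtype.ext h)
    simp [gaudinMatrix, eraseEquivSubtypeNe, hjk, hjk']

theorem gaudin_add_single {α : Finset (Fin N)} {a : Fin N} (ha : a ∈ α) (z : Fin N → ℂ)
    (c : ℂ) : gaudin K (z + Pi.single a c) α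
      = gaudin K z α + c * gaudin K (fun j => z j + K j a) (α.erase a) := by
  rw [gaudin_eq_det, gaudinMatrix_add_single K ha, det_add_diagonal_single,
    det_gaudinMatrix_submatrix_ne, ← gaudin_eq_det]

theorem gaudin_add_single_of_notMem {α : Finset (Fin N)} {a : Fin N} (ha : a ∉ α)
    (z : Fin N → ℂ) (c : ℂ) : gaudin K (z + Pi.single a c) α = gaudin K z α :=
  gaudin_congr K fun j hj => by simp [ne_of_mem_of_not_mem hj ha]

theorem sum_powerset_gaudin_mul_of_forall_eq_zero {α : Finset (Fin N)} {z : Fin N → ℂ}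
    (hz : ∀ j ∈ α, z j = 0) (w : Fin N → ℂ) :
    ∑ β ∈ α.powerset, gaudin K z β * gaudin K w (α \ β) = gaudin K w α := by
  rw [sum_eq_single_of_mem ∅ (empty_mem_powerset α), gaudin_empty, sdiff_empty, one_mul]
  intro β hβ hβ_ne
  rw [gaudin_eq_zero_of_forall_eq_zero K (nonempty_iff_ne_empty.2 hβ_ne)
    fun j hj => hz j (mem_powerset.1 hβ hj), zero_mul]

theorem sum_powerset_gaudin_mul_add_single {α : Finset (Fin N)} {b : Fin N} (hb : b ∈ α)
    (z w : Fin N → ℂ) (c : ℂ) :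
    ∑ β ∈ α.powerset, gaudin K (z + Pi.single b c) β * gaudin K w (α \ β)
      = ∑ β ∈ α.powerset, gaudin K z β * gaudin K w (α \ β)
        + c * ∑ β ∈ (α.erase b).powerset,
            gaudin K (fun j => z j + K j b) β * gaudin K w (α.erase b \ β) := by
  have hbs := notMem_erase b α
  have hα := (insert_erase hb).symm
  generalize α.erase b = s at hbs hα ⊢
  subst hα
  simp only [sum_powerset_insert hbs, mul_sum, ← sum_add_distrib]
  refine sum_congr rfl fun β hβ => ?_
  have hbβ : b ∉ β := fun h => hbs (mem_powerset.1 hβ h)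
  rw [gaudin_add_single_of_notMem K hbβ, gaudin_add_single K (mem_insert_self b β),
    erase_insert hbβ, insert_sdiff_insert, sdiff_insert_of_notMem hbs]
  ring

end Gaudin

theorem gaudin_add_split_general {N : ℕ} (K : Fin N → Fin N → ℂ)
    (z w : Fin N → ℂ) (α : Finset (Fin N)) :
    gaudin K (z + w) α = ∑ β ∈ α.powerset, gaudin K z β * gaudin K w (α \ β) := by
  induction α using Finset.strongInduction generalizing z with
  | H α ih =>
  let f z := gaudin K (z + w) α - ∑ β ∈ α.powerset, gaudin K z β * gaudin K w (α \ β)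
  have hf : ∀ z, ∀ b ∈ α, ∀ c, f (z + Pi.single b c) = f z := by
    intro z b hb c
    have hshift : (fun j => (z + w) j + K j b) = (fun j => z j + K j b) + w := by
      ext j
      simp only [Pi.add_apply]
      ring
    simp only [f, add_right_comm z, gaudin_add_single K hb, sum_powerset_gaudin_mul_add_single K hb,
      hshift, ih _ (erase_ssubset hb)]
    ring
  have hvanish : ∀ j ∈ α, α.piecewise 0 z j = 0 := fun j hj => piecewise_eq_of_mem _ _ _ hj
  have hbase : f (α.piecewise 0 z) = 0 := by
    have hw : gaudin K (α.piecewise 0 z + w) α = gaudin K w α :=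
      gaudin_congr K fun j hj => by simp [hvanish j hj]
    simp only [f, hw, sum_powerset_gaudin_mul_of_forall_eq_zero K hvanish, sub_self]
  exact sub_eq_zero.1 ((α.apply_eq_apply_piecewise_zero hf z).trans hbase)

/-- For a symmetric kernel, `ρ(z + w, α) = ∑_{β ⊆ α} ρ(z, β) · ρ(w, α \ β)`. -/
theorem gaudin_add_split {N : ℕ} (K : Fin N → Fin N → ℂ)
    (hK : ∀ j k, K j k = K k j) (z w : Fin N → ℂ) (α : Finset (Fin N)) :
    gaudin K (z + w) α = ∑ β ∈ α.powerset, gaudin K z β * gaudin K w (α \ β) :=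
  gaudin_add_split_general K z w α
end

section
/- Let N ∈ ℕ, let K : Fin N → Fin N → ℂ be a kernel, let z : Fin N → ℂ, let α be a finite subset of Fin N, and let k ∈ α. Then the symmetric-scheme Gaudin determinant ρ(z, α) is an affine function of the variable z k with slope given by the modified minor: for all s, t ∈ ℂ, ρ(Function.update z k t, α) − ρ(Function.update z k s, α) = (t − s) · ρ(z^mod, α \ {k}), where z^mod i = z i + K i k for every i. (This is the relation ∂ρ^s_l({u}_N)/∂z_k = ρ^{s,mod}_l({u}_{N−1}) of the paper, with the modification z_i → z_i + φ(u_i, u_k).) -/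
open Finset

/-- `ρ(z, α)` is affine in the variable `z k` (for `k ∈ α`), with slope the modified
minor: `ρ(update z k t, α) − ρ(update z k s, α) = (t − s) · ρ(z^mod, α \ {k})`,
where `z^mod i = z i + K i k`. -/
theorem gaudin_affine_update {N : ℕ} (K : Fin N → Fin N → ℂ) (z : Fin N → ℂ)
    (α : Finset (Fin N)) (k : Fin N) (hk : k ∈ α) (s t : ℂ) :
    gaudin K (Function.update z k t) α - gaudin K (Function.update z k s) α
      = (t - s) * gaudin K (fun i => z i + K i k) (α.erase k) := by
  classical
  set k' : {x // x ∈ α} := ⟨k, hk⟩ with hk'def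
  set Ms : Matrix α α ℂ := Matrix.of (fun j l : α =>
    if j = l then Function.update z k s j + ∑ m ∈ α.erase (j : Fin N), K j m
    else -K (j : Fin N) (l : Fin N)) with hMs
  set v : {x // x ∈ α} → ℂ := Ms k' + (t - s) • (Pi.single k' 1 : {x // x ∈ α} → ℂ)
    with hv
  have hMt : (Matrix.of fun j l : α =>
      if j = l then Function.update z k t j + ∑ m ∈ α.erase (j : Fin N), K j m
      else -K (j : Fin N) (l : Fin N))
      = Ms.updateRow k' v := by
    ext j l
    by_cases hj : j = k'
    · rw [hj, Matrix.updateRow_self]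
      have h1 : Function.update z k t ((k' : {x // x ∈ α}) : Fin N) = t :=
        Function.update_self k t z
      have h2 : Function.update z k s ((k' : {x // x ∈ α}) : Fin N) = s :=
        Function.update_self k s z
      simp only [hv, Pi.add_apply, Pi.smul_apply, Pi.single_apply, smul_eq_mul, hMs,
        Matrix.of_apply]
      by_cases hl : k' = l
      · have hl' : l = k' := hl.symm
        rw [if_pos hl, if_pos hl, if_pos hl', h1, h2]; ring
      · have hl' : ¬ l = k' := fun h => hl h.symm
        rw [if_neg hl, if_neg hl, if_neg hl', mul_zero, add_zero]
    · have hj' : (j : Fin N) ≠ k := fun h => hj (Subtype.ext h)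
      rw [Matrix.updateRow_ne hj]
      simp only [hMs, Matrix.of_apply]
      by_cases hl : j = l
      · subst hl
        rw [if_pos rfl, if_pos rfl, Function.update_of_ne hj', Function.update_of_ne hj']
      · rw [if_neg hl, if_neg hl]
  have hmem : ∀ x : {y // y ∈ α.erase k}, (x : Fin N) ∈ α := fun x =>
    Finset.mem_of_mem_erase x.2
  let e : Unit ⊕ {x // x ∈ α.erase k} ≃ {x // x ∈ α} :=
  { toFun := Sum.elim (fun _ => k') (fun j => ⟨j, hmem j⟩)
    invFun := fun x => if h : (x : Fin N) = k then Sum.inl ()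
      else Sum.inr ⟨x, Finset.mem_erase.mpr ⟨h, x.2⟩⟩
    left_inv := by
      rintro (⟨⟩ | ⟨x, hx⟩)
      · simp [hk'def]
      · have : (x : Fin N) ≠ k := (Finset.mem_erase.mp hx).1
        simp [this]
    right_inv := by
      intro x
      by_cases h : (x : Fin N) = k
      · simp only [h, dif_pos, Sum.elim_inl]
        exact Subtype.ext h.symm
      · simp [h] }
  have hminor : (Ms.updateRow k' (Pi.single k' 1)).det
      = gaudin K (fun i => z i + K i k) (α.erase k) := by
    rw [← Matrix.det_submatrix_equiv_self e]
    have hblock : (Ms.updateRow k' (Pi.single k' 1)).submatrix e e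
        = Matrix.fromBlocks 1 0
            (Matrix.of fun (i : {x // x ∈ α.erase k}) (_ : Unit) =>
              Ms ⟨i, hmem i⟩ k')
            (Matrix.of fun i l : {x // x ∈ α.erase k} =>
              if i = l then z i + K i k + ∑ m ∈ (α.erase k).erase (i : Fin N), K i m
              else -K (i : Fin N) (l : Fin N)) := by
      ext (⟨⟩ | i) (⟨⟩ | l)
      · simp [e, Matrix.updateRow_self]
      · have h0 : k' ≠ (⟨l, hmem l⟩ : {x // x ∈ α}) := by
          intro h
          exact (Finset.mem_erase.mp l.2).1 (congrArg Subtype.val h).symm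
        simp [e, Matrix.updateRow_self, Pi.single_apply, h0]
      · have hne : (⟨i, hmem i⟩ : {x // x ∈ α}) ≠ k' := by
          intro h
          exact (Finset.mem_erase.mp i.2).1 (congrArg Subtype.val h)
        simp [e, Matrix.updateRow_ne hne]
      · have hne : (⟨i, hmem i⟩ : {x // x ∈ α}) ≠ k' := by
          intro h
          exact (Finset.mem_erase.mp i.2).1 (congrArg Subtype.val h)
        have hik : (i : Fin N) ≠ k := (Finset.mem_erase.mp i.2).1
        simp only [Matrix.submatrix_apply, Matrix.updateRow_ne hne, hMs,
          Matrix.of_apply, Matrix.fromBlocks_apply₂₂, e, Equiv.coe_fn_mk,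
          Sum.elim_inr]
        by_cases hil : i = l
        · subst hil
          rw [if_pos rfl, if_pos rfl, Function.update_of_ne hik]
          have hsum : ∑ m ∈ α.erase (i : Fin N), K i m
              = K i k + ∑ m ∈ (α.erase k).erase (i : Fin N), K i m := by
            rw [Finset.erase_right_comm]
            exact (Finset.add_sum_erase _ _ (Finset.mem_erase.mpr
              ⟨fun h => hik h.symm, hk⟩)).symm
          rw [hsum]; ring
        · have h1 : (⟨i, hmem i⟩ : {x // x ∈ α}) ≠ ⟨l, hmem l⟩ := by
            intro h
            exact hil (Subtype.ext (Subtype.mk_eq_mk.mp h))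
          rw [if_neg h1, if_neg hil]
    rw [hblock, Matrix.det_fromBlocks_zero₁₂, Matrix.det_one, one_mul]
    rfl
  have h1 : gaudin K (Function.update z k t) α
      = Ms.det + (t - s) * gaudin K (fun i => z i + K i k) (α.erase k) := by
    rw [gaudin, hMt, hv, Matrix.det_updateRow_add, Matrix.updateRow_eq_self,
      Matrix.det_updateRow_smul, hminor]
  have h2 : gaudin K (Function.update z k s) α = Ms.det := rfl
  rw [h1, h2]; ring
end

section
/- Let g ∈ ℂ with g ≠ 0, let u, v ∈ ℂ with u ≠ v, and let xm, xp, ym, yp ∈ ℂ be nonzero with xm + xm⁻¹ = (u − i/2)/g, xp + xp⁻¹ = (u + i/2)/g, ym + ym⁻¹ = (v − i/2)/g, yp + yp⁻¹ = (v + i/2)/g. Assume moreover xm ≠ yp, xm·ym ≠ 1, and xp·yp ≠ 1. Define the rational parts h₀ = ((xm − ym)/(xm − yp)) · ((1 − 1/(xm·yp))/(1 − 1/(xp·yp))) and h̃₀ = (1 − 1/(xm·yp))² / ((1 − 1/(xm·ym)) · (1 − 1/(xp·yp))). Then h̃₀ = ((u − v − i)/(u − v)) · h₀, equivalently 1/h₀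 = ((u−v−i)/(u−v)) · (1/h̃₀). (This is the relation 1/h(u,v) = ((u−v−i)/(u−v)) · (1/h̃(u,v)) of the paper, with the BES dressing phase σ₁₂ cancelling between h and h̃.) -/
open Complex

/-- The relation `1/h(u,v) = ((u−v−i)/(u−v)) · (1/h̃(u,v))` between the rational
parts of the hexagon weight functions, in terms of the Zhukowsky variables
`xm = x(u − i/2)`, `xp = x(u + i/2)`, `ym = x(v − i/2)`, `yp = x(v + i/2)`. -/
theorem h_htilde_relation (g u v xm xp ym yp : ℂ) (hg : g ≠ 0) (huv : u ≠ v)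
    (hxm0 : xm ≠ 0) (hxp0 : xp ≠ 0) (hym0 : ym ≠ 0) (hyp0 : yp ≠ 0)
    (hxm : xm + xm⁻¹ = (u - I / 2) / g)
    (hxp : xp + xp⁻¹ = (u + I / 2) / g)
    (hym : ym + ym⁻¹ = (v - I / 2) / g)
    (hyp : yp + yp⁻¹ = (v + I / 2) / g)
    (hne : xm ≠ yp) (hmm : xm * ym ≠ 1) (hpp : xp * yp ≠ 1) :
    (1 - 1 / (xm * yp)) ^ 2 / ((1 - 1 / (xm * ym)) * (1 - 1 / (xp * yp)))
      = ((u - v - I) / (u - v)) *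
        (((xm - ym) / (xm - yp)) * ((1 - 1 / (xm * yp)) / (1 - 1 / (xp * yp)))) := by
  have huv' : u - v ≠ 0 := sub_ne_zero.mpr huv
  have hne' : xm - yp ≠ 0 := sub_ne_zero.mpr hne
  have hmm' : (1 : ℂ) - 1 / (xm * ym) ≠ 0 := by
    intro h
    apply hmm
    have hx : xm * ym ≠ 0 := mul_ne_zero hxm0 hym0
    field_simp at h
    linear_combination h
  have hpp' : (1 : ℂ) - 1 / (xp * yp) ≠ 0 := by
    intro h
    apply hpp
    have hx : xp * yp ≠ 0 := mul_ne_zero hxp0 hyp0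
    field_simp at h
    linear_combination h
  have e1 : (xm - ym) * (1 - 1 / (xm * ym)) = (u - v) / g := by
    have h1 := hxm; have h2 := hym
    field_simp at h1 h2 ⊢
    linear_combination (h1 * ym - h2 * xm) / 2
  have e2 : (xm - yp) * (1 - 1 / (xm * yp)) = (u - v - I) / g := by
    have h1 := hxm; have h2 := hyp
    field_simp at h1 h2 ⊢
    linear_combination (h1 * yp - h2 * xm) / 2
  have hmym : xm - ym ≠ 0 := by
    intro h
    rw [h, zero_mul] at e1
    exact huv' ((div_eq_zero_iff.mp e1.symm).resolve_right hg)
  have e1' : u - v = g * ((xm - ym) * (1 - 1 / (xm * ym))) := by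
    rw [e1]; field_simp
  have e2' : u - v - I = g * ((xm - yp) * (1 - 1 / (xm * yp))) := by
    rw [e2]; field_simp
  rw [e2', e1']
  set A := 1 - 1 / (xm * yp) with hA
  set B := 1 - 1 / (xm * ym) with hB
  set C := 1 - 1 / (xp * yp) with hC
  set P := xm - ym with hP
  set Q := xm - yp with hQ
  field_simp
end
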